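/- Let V be a finite-dimensional vector space over a field of characteristic zero and let N₁, …, N_l be commuting nilpotent endomorphisms of V. Suppose that for every choice of positive reals c₁, …, c_l, the monodromy weight filtration of Σ cᵢNᵢ equals a fixed filtration W (which holds by the Cattani–Kaplan theorem when the Nᵢ arise from a nilpotent orbit). Then each Nⱼ satisfies Nⱼ(W_k) ⊆ W_{k-2} for all k. -/

import Mathlib

/-- `W` is the monodromy weight filtration (centered at 0) of the nilpotent endomorphism
`N`: a finite increasing filtration with `N (W k) ⊆ W (k-2)` such that `N^k` induces an
isomorphism `gr^W_k V ≅ gr^W_{-k} V` for `k ≥ 0` (encoded by surjectivity and injectivity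
conditions on submodules). -/
def IsMonodromyWeightFiltration {R V : Type*} [CommRing R] [AddCommGroup V] [Module R V]
    (N : Module.End R V) (W : ℤ → Submodule R V) : Prop :=
  Monotone W ∧ (∃ a, W a = ⊥) ∧ (∃ b, W b = ⊤) ∧
  (∀ k : ℤ, Submodule.map N (W k) ≤ W (k - 2)) ∧
  (∀ k : ℕ,
    W (-(k : ℤ)) ≤ Submodule.map (N ^ k : Module.End R V) (W (k : ℤ)) ⊔ W (-(k : ℤ) - 1) ∧
    W (k : ℤ) ⊓ Submodule.comap (N ^ k : Module.End R V) (W (-(k : ℤ) - 1)) ≤ W ((k : ℤ) - 1))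

/-!
For positive weights `c` and `c'` the filtration `W` is lowered by two by both `∑ cᵢ Nᵢ` and
`∑ c'ᵢ Nᵢ`, and the endomorphisms lowering `W` by two form a linear subspace. Taking `c = 1` and
`c'` equal to `1` except `c'ⱼ = 2`, the difference `∑ c'ᵢ Nᵢ - ∑ cᵢ Nᵢ = Nⱼ` lowers `W` by two.
-/

open Submodule

section WeightLowering

variable {R V : Type*} [CommRing R] [AddCommGroup V] [Module R V]

def weightLowering (W : ℤ → Submodule R V) (d : ℤ) : Submodule R (Module.End R V) :=
  ⨅ k, compatibleMaps (W k) (W (k - d))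

theorem mem_weightLowering_iff {W : ℤ → Submodule R V} {d : ℤ} {f : Module.End R V} :
    f ∈ weightLowering W d ↔ ∀ k, map f (W k) ≤ W (k - d) := by
  simp only [weightLowering, mem_iInf, map_le_iff_le_comap]
  rfl

theorem IsMonodromyWeightFiltration.mem_weightLowering {N : Module.End R V}
    {W : ℤ → Submodule R V} (hW : IsMonodromyWeightFiltration N W) :
    N ∈ weightLowering W 2 :=
  mem_weightLowering_iff.2 hW.2.2.2.1

end WeightLowering

theorem Finset.sum_one_add_single_smul {ι R M : Type*} [Fintype ι] [DecidableEq ι] [Semiring R]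
    [AddCommMonoid M] [Module R M] (f : ι → M) (j : ι) :
    ∑ i, (1 + Pi.single j 1 : ι → R) i • f i = ∑ i, f i + f j := by
  simp [add_smul, Finset.sum_add_distrib, Pi.single_apply]

theorem stmt9_general {V : Type*} [AddCommGroup V] [Module ℝ V]
    {l : ℕ} (N : Fin l → Module.End ℝ V)
    (W : ℤ → Submodule ℝ V)
    (hW : ∀ c : Fin l → ℝ, (∀ i, 0 < c i) →
      IsMonodromyWeightFiltration (∑ i, c i • N i) W) :
    ∀ (j : Fin l) (k : ℤ), Submodule.map (N j) (W k) ≤ W (k - 2) := by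
  intro j
  have hpos : ∀ i, 0 < (1 + Pi.single j 1 : Fin l → ℝ) i := fun i => by
    rw [Pi.add_apply, Pi.single_apply]
    split_ifs <;> norm_num
  have hsum := (hW 1 fun _ => one_pos).mem_weightLowering
  have hsum' := (hW _ hpos).mem_weightLowering
  rw [Finset.sum_one_add_single_smul] at hsum'
  simp only [Pi.one_apply, one_smul] at hsum
  have hdiff := sub_mem hsum' hsum
  rwa [add_sub_cancel_left, mem_weightLowering_iff] at hdiff

/-- Let `N₁, …, N_l` be commuting nilpotent endomorphisms of a finite-dimensional real
vector space `V`, and let `W` be a fixed finite increasing filtration which is the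
monodromy weight filtration of `Σ cᵢ Nᵢ` for every choice of positive reals `cᵢ`
(Cattani–Kaplan). Then each `Nⱼ` satisfies `Nⱼ (W k) ⊆ W (k - 2)` for all `k`. -/
theorem stmt9 {V : Type*} [AddCommGroup V] [Module ℝ V] [FiniteDimensional ℝ V]
    {l : ℕ} (N : Fin l → Module.End ℝ V)
    (hcomm : ∀ i j, Commute (N i) (N j)) (hnil : ∀ i, IsNilpotent (N i))
    (W : ℤ → Submodule ℝ V)
    (hW : ∀ c : Fin l → ℝ, (∀ i, 0 < c i) →
      IsMonodromyWeightFiltration (∑ i, c i • N i) W) :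
    ∀ (j : Fin l) (k : ℤ), Submodule.map (N j) (W k) ≤ W (k - 2) :=
  stmt9_general N W hW
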